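/- Let n ≥ 1, let E = ℝⁿ (EuclideanSpace ℝ (Fin n)), let η > 0, and let F : E → E be a continuous function that is η-strongly monotone, i.e. ⟪F x − F y, x − y⟫ ≥ η‖x − y‖² for all x, y ∈ E. Then F is bijective. -/

import Mathlib

/-!
Strong monotonicity makes `F` antilipschitz with constant `η⁻¹`, hence injective and proper, so its
range is closed. When `F` is `C¹`, its derivative satisfies `⟪f' v, v⟫ ≥ η ‖v‖²`, so it is
invertible and the inverse function theorem makes the range open; as `E` is connected, `F` is
onto. A merely continuous `F` is approximated by mollifications `φₖ ⋆ F`, which remain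
`η`-strongly monotone. The solutions `xₖ` of `(φₖ ⋆ F) xₖ = b` are bounded by the antilipschitz
estimate, and along a convergent subsequence `(φₖ ⋆ F) xₖ → F a`, so `F a = b`.
-/

open RealInnerProductSpace MeasureTheory Filter Topology Function
open scoped Convolution

noncomputable def mollifier (E : Type*) [Zero E] (k : ℕ) : ContDiffBump (0 : E) where
  rIn := 1 / ((k : ℝ) + 2)
  rOut := 1 / ((k : ℝ) + 1)
  rIn_pos := by positivity
  rIn_lt_rOut := one_div_lt_one_div_of_lt (by positivity) (by linarith)

theorem tendsto_mollifier_rOut {E : Type*} [Zero E] :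
    Tendsto (fun k => (mollifier E k).rOut) atTop (𝓝 0) :=
  tendsto_one_div_add_atTop_nhds_zero_nat

variable {E : Type*} [NormedAddCommGroup E] [InnerProductSpace ℝ E]

def StronglyMonotone (η : ℝ) (F : E → E) : Prop :=
  ∀ x y, η * ‖x - y‖ ^ 2 ≤ ⟪F x - F y, x - y⟫

namespace StronglyMonotone

variable {η : ℝ} {F : E → E}

theorem mul_norm_sub_le (hF : StronglyMonotone η F) (x y : E) :
    η * ‖x - y‖ ≤ ‖F x - F y‖ := by
  rcases eq_or_ne x y with rfl | hxy
  · simp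
  have hpos : 0 < ‖x - y‖ := norm_pos_iff.mpr (sub_ne_zero.mpr hxy)
  refine le_of_mul_le_mul_right ?_ hpos
  calc η * ‖x - y‖ * ‖x - y‖ = η * ‖x - y‖ ^ 2 := by ring
    _ ≤ ⟪F x - F y, x - y⟫ := hF x y
    _ ≤ ‖F x - F y‖ * ‖x - y‖ := real_inner_le_norm _ _

theorem antilipschitzWith (hF : StronglyMonotone η F) (hη : 0 < η) :
    AntilipschitzWith (Real.toNNReal η⁻¹) F :=
  AntilipschitzWith.of_le_mul_dist fun x y => by
    rw [dist_eq_norm, dist_eq_norm, Real.coe_toNNReal _ (inv_nonneg.mpr hη.le),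
      ← div_eq_inv_mul, le_div_iff₀' hη]
    exact hF.mul_norm_sub_le x y

theorem isProperMap [ProperSpace E] (hF : StronglyMonotone η F) (hη : 0 < η)
    (hcont : Continuous F) : IsProperMap F := by
  refine isProperMap_iff_tendsto_cocompact.mpr ⟨hcont, ?_⟩
  simpa only [← Metric.cobounded_eq_cocompact] using (hF.antilipschitzWith hη).tendsto_cobounded

theorem mul_norm_sq_le_inner_of_hasFDerivAt (hF : StronglyMonotone η F) {f' : E →L[ℝ] E}
    {x : E} (hf : HasFDerivAt F f' x) (v : E) : η * ‖v‖ ^ 2 ≤ ⟪f' v, v⟫ := by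
  let g : ℝ → ℝ := fun t => ⟪v, F (x + t • v)⟫ - η * ‖v‖ ^ 2 * t
  have hline : HasDerivAt (fun t : ℝ => x + t • v) v 0 := by
    simpa using ((hasDerivAt_id (0 : ℝ)).smul_const v).const_add x
  have hg : HasDerivAt g (⟪v, f' v⟫ - η * ‖v‖ ^ 2) 0 := by
    have hf0 : HasFDerivAt F f' (x + (0 : ℝ) • v) := by simpa using hf
    have := ((innerSL ℝ v).hasFDerivAt.comp_hasDerivAt 0 (hf0.comp_hasDerivAt 0 hline)).sub
      ((hasDerivAt_id (0 : ℝ)).const_mul (η * ‖v‖ ^ 2))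
    simp only [mul_one] at this
    exact this
  have hmono : Monotone g := by
    intro s t hst
    rcases hst.eq_or_lt with rfl | hlt
    · rfl
    have h := hF (x + t • v) (x + s • v)
    rw [add_sub_add_left_eq_sub, ← sub_smul, real_inner_smul_right, real_inner_comm v,
      inner_sub_right, norm_smul, mul_pow, Real.norm_eq_abs, sq_abs] at h
    have key : η * ‖v‖ ^ 2 * (t - s) ≤ ⟪v, F (x + t • v)⟫ - ⟪v, F (x + s • v)⟫ :=
      le_of_mul_le_mul_left (by linear_combination h) (sub_pos.mpr hlt)
    simp only [g]
    linarith
  have := hmono.deriv_nonneg (x := 0)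
  rw [hg.deriv, real_inner_comm] at this
  linarith

theorem injective_of_hasFDerivAt (hF : StronglyMonotone η F) (hη : 0 < η) {f' : E →L[ℝ] E}
    {x : E} (hf : HasFDerivAt F f' x) : Injective f' := by
  refine (injective_iff_map_eq_zero f').mpr fun v hv => ?_
  have h := hF.mul_norm_sq_le_inner_of_hasFDerivAt hf v
  rw [hv, inner_zero_left] at h
  exact norm_eq_zero.mp (pow_eq_zero_iff two_ne_zero |>.mp
    (le_antisymm (nonpos_of_mul_nonpos_right h hη) (sq_nonneg _)))

theorem isOpen_range [FiniteDimensional ℝ E] (hF : StronglyMonotone η F) (hη : 0 < η)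
    (hC : ContDiff ℝ 1 F) : IsOpen (Set.range F) := by
  rw [isOpen_iff_mem_nhds]
  rintro _ ⟨a, rfl⟩
  have hd : HasStrictFDerivAt F (fderiv ℝ F a) a := hC.contDiffAt.hasStrictFDerivAt one_ne_zero
  have hsurj : Surjective (fderiv ℝ F a) :=
    LinearMap.injective_iff_surjective.mp (hF.injective_of_hasFDerivAt hη hd.hasFDerivAt)
  rw [← hd.map_nhds_eq_of_surj (LinearMap.range_eq_top.mpr hsurj)]
  exact range_mem_map

theorem convolution [FiniteDimensional ℝ E] [MeasurableSpace E] [BorelSpace E]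
    (hF : StronglyMonotone η F) (hcont : Continuous F) (μ : Measure E) [μ.IsAddHaarMeasure]
    (φ : ContDiffBump (0 : E)) :
    StronglyMonotone η (φ.normed μ ⋆[ContinuousLinearMap.lsmul ℝ ℝ, μ] F) := by
  intro x y
  set ψ := φ.normed μ
  have hF_shift : ∀ z, Continuous fun t => F (z - t) := fun z => hcont.comp (continuous_sub_left z)
  have hint : ∀ z, Integrable (fun t => ψ t • F (z - t)) μ := fun z =>
    (φ.continuous_normed.smul (hF_shift z)).integrable_of_hasCompactSupport
      φ.hasCompactSupport_normed.smul_right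
  have hdiff : (ψ ⋆[ContinuousLinearMap.lsmul ℝ ℝ, μ] F) x
      - (ψ ⋆[ContinuousLinearMap.lsmul ℝ ℝ, μ] F) y = ∫ t, ψ t • (F (x - t) - F (y - t)) ∂μ := by
    simp only [convolution_def, ContinuousLinearMap.lsmul_apply, smul_sub]
    exact (integral_sub (hint x) (hint y)).symm
  have hint_inner : Integrable (fun t => ψ t * ⟪F (x - t) - F (y - t), x - y⟫) μ :=
    (φ.continuous_normed.mul (((hF_shift x).sub (hF_shift y)).inner continuous_const))
      |>.integrable_of_hasCompactSupport φ.hasCompactSupport_normed.mul_right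
  calc η * ‖x - y‖ ^ 2 = ∫ t, ψ t * (η * ‖x - y‖ ^ 2) ∂μ := by
        rw [integral_mul_const, φ.integral_normed, one_mul]
    _ ≤ ∫ t, ψ t * ⟪F (x - t) - F (y - t), x - y⟫ ∂μ := by
        refine integral_mono (φ.integrable_normed.mul_const _) hint_inner fun t => ?_
        have h := hF (x - t) (y - t)
        rw [sub_sub_sub_cancel_right] at h
        exact mul_le_mul_of_nonneg_left h (φ.nonneg_normed t)
    _ = ⟪∫ t, ψ t • (F (x - t) - F (y - t)) ∂μ, x - y⟫ := by
        rw [real_inner_comm, ← integral_inner ((hint x).sub (hint y) |>.congr ?_)]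
        · simp only [real_inner_smul_right, real_inner_comm (x - y)]
        · exact Eventually.of_forall fun t => by simp only [Pi.sub_apply, smul_sub]
    _ = _ := by rw [hdiff]

theorem surjective_of_contDiff [FiniteDimensional ℝ E] (hF : StronglyMonotone η F)
    (hη : 0 < η) (hC : ContDiff ℝ 1 F) : Surjective F := by
  have hclopen : IsClopen (Set.range F) :=
    ⟨(hF.isProperMap hη hC.continuous).isClosed_range, hF.isOpen_range hη hC⟩
  exact Set.range_eq_univ.mp (hclopen.eq_univ (Set.range_nonempty F))

theorem surjective [FiniteDimensional ℝ E] (hF : StronglyMonotone η F) (hη : 0 < η)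
    (hcont : Continuous F) : Surjective F := by
  borelize E
  intro b
  let μ : Measure E := Measure.addHaar
  let G : ℕ → E → E := fun k => (mollifier E k).normed μ ⋆[ContinuousLinearMap.lsmul ℝ ℝ, μ] F
  have hG_mono : ∀ k, StronglyMonotone η (G k) := fun k =>
    hF.convolution hcont μ (mollifier E k)
  have hG_smooth : ∀ k, ContDiff ℝ 1 (G k) := fun k =>
    (mollifier E k).hasCompactSupport_normed.contDiff_convolution_left _
      (mollifier E k).contDiff_normed hcont.locallyIntegrable
  choose x hx using fun k => (hG_mono k).surjective_of_contDiff hη (hG_smooth k) b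
  have hG_zero : Tendsto (fun k => G k 0) atTop (𝓝 (F 0)) :=
    ContDiffBump.convolution_tendsto_right_of_continuous tendsto_mollifier_rOut hcont 0
  obtain ⟨B, hB⟩ := ((tendsto_const_nhds (x := b)).sub hG_zero).norm.bddAbove_range
  have hx_bdd : ∀ k, ‖x k‖ ≤ B / η := fun k => by
    rw [le_div_iff₀' hη]
    calc η * ‖x k‖ = η * ‖x k - 0‖ := by rw [sub_zero]
      _ ≤ ‖G k (x k) - G k 0‖ := (hG_mono k).mul_norm_sub_le _ _
      _ = ‖b - G k 0‖ := by rw [hx]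
      _ ≤ B := hB ⟨k, rfl⟩
  obtain ⟨a, -, ψ, hψ, hxa⟩ := tendsto_subseq_of_bounded (Metric.isBounded_closedBall (x := 0))
    fun k => mem_closedBall_zero_iff.mpr (hx_bdd k)
  have hlim : Tendsto (fun j => G (ψ j) (x (ψ j))) atTop (𝓝 (F a)) :=
    ContDiffBump.convolution_tendsto_right (tendsto_mollifier_rOut.comp hψ.tendsto_atTop)
      (Eventually.of_forall fun _ => hcont.aestronglyMeasurable)
      ((hcont.tendsto a).comp tendsto_snd) hxa
  simp only [hx] at hlim
  exact ⟨a, tendsto_nhds_unique hlim tendsto_const_nhds⟩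

end StronglyMonotone

theorem strongly_monotone_continuous_bijective
    (n : ℕ) (η : ℝ) (hη : 0 < η)
    (F : EuclideanSpace ℝ (Fin n) → EuclideanSpace ℝ (Fin n))
    (hcont : Continuous F)
    (hmono : ∀ x y : EuclideanSpace ℝ (Fin n),
      ⟪F x - F y, x - y⟫ ≥ η * ‖x - y‖ ^ 2) :
    Function.Bijective F :=
  ⟨(StronglyMonotone.antilipschitzWith hmono hη).injective,
    StronglyMonotone.surjective hmono hη hcont⟩
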